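/- Let (X_t) be the (n,k)-Bernoulli–Laplace chain with n ≥ 2. Then for all t ≥ 0 and all X₀ ∈ {0,...,n}, E_{X₀}[f₁(X_t)²] = 1/(2n−1) + (2n−2)/(2n−1) · f₂(k)^t · f₂(X₀), where f₁(x) = 1 − 2x/n and f₂(x) = 1 − 2(2n−1)x/n² + 2(2n−1)x(x−1)/(n²(n−1)). -/

import Mathlib

/-- The hypergeometric pmf. -/
noncomputable def hyperPMF (n ℓ k a : ℕ) : ℝ :=
  ((ℓ.choose a * (n - ℓ).choose (k - a) : ℕ) : ℝ) / ((n.choose k : ℕ) : ℝ)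

/-- One-step transition probability of the (n,k)-Bernoulli–Laplace chain. -/
noncomputable def blTrans (n k x y : ℕ) : ℝ :=
  ∑ a ∈ Finset.range (k + 1), ∑ b ∈ Finset.range (k + 1),
    if (x : ℤ) - a + b = y then hyperPMF n x k a * hyperPMF n (n - x) k b else 0

/-- The transition operator: `(blStep n k g) x = E_x[g(X₁)]`. -/
noncomputable def blStep (n k : ℕ) (g : ℕ → ℝ) (x : ℕ) : ℝ :=
  ∑ y ∈ Finset.range (n + 1), blTrans n k x y * g y

/-- The first eigenfunction `f₁(x) = 1 - 2x/n`. -/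
noncomputable def f1 (n : ℕ) (x : ℝ) : ℝ := 1 - 2 * x / (n : ℝ)

/-- The second eigenfunction. -/
noncomputable def f2 (n : ℕ) (x : ℝ) : ℝ :=
  1 - 2 * (2 * (n : ℝ) - 1) * x / (n : ℝ) ^ 2
    + 2 * (2 * (n : ℝ) - 1) * x * (x - 1) / ((n : ℝ) ^ 2 * ((n : ℝ) - 1))

open Finset

lemma vand0 (m p k : ℕ) :
    ∑ a ∈ range (k+1), m.choose a * p.choose (k-a) = (m+p).choose k := by
  rw [Nat.add_choose_eq, Finset.Nat.sum_antidiagonal_eq_sum_range_succ_mk]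

lemma succ_choose (m a : ℕ) : (a+1) * m.choose (a+1) = m * (m-1).choose a := by
  cases m with
  | zero => simp
  | succ m =>
    rw [Nat.succ_sub_one, mul_comm]
    exact (Nat.add_one_mul_choose_eq m a).symm

lemma vand1 (m p k : ℕ) (hk : 1 ≤ k) :
    ∑ a ∈ range (k+1), a * (m.choose a * p.choose (k-a)) = m * ((m-1+p).choose (k-1)) := by
  obtain ⟨k', rfl⟩ : ∃ k', k = k'+1 := ⟨k-1, by omega⟩
  rw [Finset.sum_range_succ']
  simp only [zero_mul, add_zero, Nat.add_sub_cancel]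
  have step : ∀ a, (a+1) * (m.choose (a+1) * p.choose (k'+1-(a+1)))
      = m * ((m-1).choose a * p.choose (k'-a)) := by
    intro a
    have h1 : k'+1-(a+1) = k'-a := by omega
    rw [h1, ← mul_assoc, succ_choose, mul_assoc]
  rw [Finset.sum_congr rfl fun a _ => step a, ← Finset.mul_sum, vand0]

lemma vand2 (m p k : ℕ) (hk : 2 ≤ k) :
    ∑ a ∈ range (k+1), a * (a-1) * (m.choose a * p.choose (k-a))
      = m * (m-1) * ((m-2+p).choose (k-2)) := by
  obtain ⟨k', rfl⟩ : ∃ k', k = k'+2 := ⟨k-2, by omega⟩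
  rw [Finset.sum_range_succ', Finset.sum_range_succ']
  simp only [zero_mul, mul_zero, add_zero, Nat.add_sub_cancel, Nat.sub_self, mul_one]
  have step : ∀ a, (a+1+1) * (a+1) * (m.choose (a+1+1) * p.choose (k'+2-(a+1+1)))
      = (m * (m-1)) * ((m-2).choose a * p.choose (k'-a)) := by
    intro a
    have h1 : k'+2-(a+1+1) = k'-a := by omega
    have e1 : (a+2) * m.choose (a+2) = m * (m-1).choose (a+1) := succ_choose m (a+1)
    have e2 : (a+1) * (m-1).choose (a+1) = (m-1) * (m-2).choose a := by
      have := succ_choose (m-1) a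
      rwa [show m-1-1 = m-2 from by omega] at this
    rw [h1, show a+1+1 = a+2 from rfl]
    calc (a+2) * (a+1) * (m.choose (a+2) * p.choose (k'-a))
        = (a+1) * ((a+2) * m.choose (a+2)) * p.choose (k'-a) := by ring
      _ = (a+1) * (m * (m-1).choose (a+1)) * p.choose (k'-a) := by rw [e1]
      _ = m * ((a+1) * (m-1).choose (a+1)) * p.choose (k'-a) := by ring
      _ = m * ((m-1) * (m-2).choose a) * p.choose (k'-a) := by rw [e2]
      _ = (m * (m-1)) * ((m-2).choose a * p.choose (k'-a)) := by ring
  rw [Finset.sum_congr rfl fun a _ => step a, ← Finset.mul_sum, vand0]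

lemma choose_id1 (n k : ℕ) (hn : 1 ≤ n) (hk : 1 ≤ k) :
    n * (n-1).choose (k-1) = n.choose k * k := by
  have h := Nat.add_one_mul_choose_eq (n-1) (k-1)
  rwa [show n-1+1 = n from by omega, show k-1+1 = k from by omega] at h

lemma momentA1 (n k ℓ : ℕ) (hℓ : ℓ ≤ n) (hn : 1 ≤ n) :
    n * ∑ a ∈ range (k+1), a * (ℓ.choose a * (n-ℓ).choose (k-a)) = k * ℓ * n.choose k := by
  rcases Nat.eq_zero_or_pos k with rfl | hk
  · simp
  rcases Nat.eq_zero_or_pos ℓ with rfl | hℓ1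
  · have h0 : ∀ a ∈ range (k+1), a * (Nat.choose 0 a * (n-0).choose (k-a)) = 0 := by
      intro a _
      cases a with
      | zero => simp
      | succ a => simp [Nat.choose_eq_zero_of_lt (Nat.succ_pos a)]
    rw [Finset.sum_congr rfl h0]
    simp
  · rw [vand1 _ _ _ hk, show ℓ-1+(n-ℓ) = n-1 from by omega]
    calc n * (ℓ * (n-1).choose (k-1)) = ℓ * (n * (n-1).choose (k-1)) := by ring
      _ = ℓ * (n.choose k * k) := by rw [choose_id1 n k hn hk]
      _ = k * ℓ * n.choose k := by ring

lemma momentA2 (n k ℓ : ℕ) (hℓ : ℓ ≤ n) (hn : 2 ≤ n) :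
    n * (n-1) * ∑ a ∈ range (k+1), a * (a-1) * (ℓ.choose a * (n-ℓ).choose (k-a))
      = k * (k-1) * (ℓ * (ℓ-1)) * n.choose k := by
  rcases lt_or_ge k 2 with hk2 | hk2
  · have h0 : ∀ a ∈ range (k+1), a * (a-1) * (ℓ.choose a * (n-ℓ).choose (k-a)) = 0 := by
      intro a ha
      simp only [Finset.mem_range] at ha
      have : a ≤ 1 := by omega
      interval_cases a <;> simp
    rw [Finset.sum_congr rfl h0]
    have hkk : k * (k-1) = 0 := by interval_cases k <;> simp
    rw [hkk]
    simp
  rcases lt_or_ge ℓ 2 with hl2 | hl2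
  · have h0 : ∀ a ∈ range (k+1), a * (a-1) * (ℓ.choose a * (n-ℓ).choose (k-a)) = 0 := by
      intro a _
      rcases lt_or_ge a 2 with h | h
      · interval_cases a <;> simp
      · simp [Nat.choose_eq_zero_of_lt (lt_of_lt_of_le hl2 h)]
    rw [Finset.sum_congr rfl h0]
    have hll : ℓ * (ℓ-1) = 0 := by interval_cases ℓ <;> simp
    rw [hll]
    simp
  · rw [vand2 _ _ _ hk2, show ℓ-2+(n-ℓ) = n-2 from by omega]
    have h2 : (n-1) * (n-2).choose (k-2) = (n-1).choose (k-1) * (k-1) := by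
      have h := Nat.add_one_mul_choose_eq (n-2) (k-2)
      rwa [show n-2+1 = n-1 from by omega, show k-2+1 = k-1 from by omega] at h
    have h1 : n * (n-1).choose (k-1) = n.choose k * k := choose_id1 n k (by omega) (by omega)
    calc n * (n-1) * (ℓ * (ℓ-1) * (n-2).choose (k-2))
        = (ℓ * (ℓ-1)) * n * ((n-1) * (n-2).choose (k-2)) := by ring
      _ = (ℓ * (ℓ-1)) * n * ((n-1).choose (k-1) * (k-1)) := by rw [h2]
      _ = (ℓ * (ℓ-1)) * (k-1) * (n * (n-1).choose (k-1)) := by ring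
      _ = (ℓ * (ℓ-1)) * (k-1) * (n.choose k * k) := by rw [h1]
      _ = k * (k-1) * (ℓ * (ℓ-1)) * n.choose k := by ring

lemma cast_pred_mul (m : ℕ) : ((m*(m-1) : ℕ):ℝ) = (m:ℝ)*((m:ℝ)-1) := by
  cases m with
  | zero => simp
  | succ m => push_cast [Nat.succ_sub_one]; ring

lemma rmom0 (n k ℓ : ℕ) (hℓ : ℓ ≤ n) :
    ∑ a ∈ range (k+1), ((ℓ.choose a * (n-ℓ).choose (k-a) : ℕ):ℝ) = ((n.choose k : ℕ):ℝ) := by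
  have h := vand0 ℓ (n-ℓ) k
  rw [show ℓ + (n-ℓ) = n from by omega] at h
  exact_mod_cast h

lemma rmom1 (n k ℓ : ℕ) (hℓ : ℓ ≤ n) (hn : 1 ≤ n) :
    (n:ℝ) * ∑ a ∈ range (k+1), (a:ℝ) * ((ℓ.choose a * (n-ℓ).choose (k-a) : ℕ):ℝ)
      = (k:ℝ) * (ℓ:ℝ) * ((n.choose k : ℕ):ℝ) := by
  exact_mod_cast momentA1 n k ℓ hℓ hn

lemma rmom2 (n k ℓ : ℕ) (hℓ : ℓ ≤ n) (hn : 2 ≤ n) :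
    (n:ℝ)*((n:ℝ)-1) * ∑ a ∈ range (k+1), (a:ℝ)*((a:ℝ)-1) * ((ℓ.choose a * (n-ℓ).choose (k-a) : ℕ):ℝ)
      = (k:ℝ)*((k:ℝ)-1) * ((ℓ:ℝ)*((ℓ:ℝ)-1)) * ((n.choose k : ℕ):ℝ) := by
  have h := momentA2 n k ℓ hℓ hn
  have h' : ((n*(n-1):ℕ):ℝ) * ((∑ a ∈ range (k+1), a*(a-1)*(ℓ.choose a * (n-ℓ).choose (k-a)) : ℕ):ℝ)
      = ((k*(k-1):ℕ):ℝ) * ((ℓ*(ℓ-1):ℕ):ℝ) * ((n.choose k:ℕ):ℝ) := by exact_mod_cast h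
  rw [cast_pred_mul, cast_pred_mul, cast_pred_mul] at h'
  have e : ∑ a ∈ range (k+1), (a:ℝ)*((a:ℝ)-1) * ((ℓ.choose a * (n-ℓ).choose (k-a) : ℕ):ℝ)
      = ((∑ a ∈ range (k+1), a*(a-1)*(ℓ.choose a * (n-ℓ).choose (k-a)) : ℕ):ℝ) := by
    rw [Nat.cast_sum]
    refine Finset.sum_congr rfl fun a _ => ?_
    cases a with
    | zero => simp
    | succ a => push_cast [Nat.succ_sub_one]; ring
  rw [e]
  linear_combination h'

lemma helper (R : Finset ℕ) (q : ℕ → ℝ) (u v w : ℝ) :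
    ∑ b ∈ R, (u * q b + v * ((b:ℝ) * q b) + w * ((b:ℝ) * ((b:ℝ)-1) * q b))
      = u * (∑ b ∈ R, q b) + v * (∑ b ∈ R, (b:ℝ) * q b)
        + w * (∑ b ∈ R, (b:ℝ) * ((b:ℝ)-1) * q b) := by
  rw [Finset.sum_add_distrib, Finset.sum_add_distrib, Finset.mul_sum, Finset.mul_sum, Finset.mul_sum]

lemma helper3 (R : Finset ℕ) (X Y Z : ℕ → ℝ) (s0 s1 s2 : ℝ) :
    ∑ a ∈ R, (X a * s0 + Y a * s1 + Z a * s2)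
      = (∑ a ∈ R, X a) * s0 + (∑ a ∈ R, Y a) * s1 + (∑ a ∈ R, Z a) * s2 := by
  rw [Finset.sum_add_distrib, Finset.sum_add_distrib, Finset.sum_mul, Finset.sum_mul, Finset.sum_mul]


lemma blStep_eq (n k x : ℕ) (hx : x ≤ n) (g : ℕ → ℝ) :
    blStep n k g x = ∑ a ∈ range (k+1), ∑ b ∈ range (k+1),
      hyperPMF n x k a * hyperPMF n (n - x) k b * g (x - a + b) := by
  unfold blStep blTrans
  simp only [Finset.sum_mul]
  rw [Finset.sum_comm]
  refine Finset.sum_congr rfl fun a _ => ?_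
  rw [Finset.sum_comm]
  refine Finset.sum_congr rfl fun b _ => ?_
  simp only [ite_mul, zero_mul]
  by_cases hP : hyperPMF n x k a = 0
  · simp [hP]
  by_cases hQ : hyperPMF n (n - x) k b = 0
  · simp [hQ]
  have ha : a ≤ x := by
    by_contra h
    apply hP
    unfold hyperPMF
    rw [Nat.choose_eq_zero_of_lt (by omega)]
    simp
  have hb' : b ≤ n - x := by
    by_contra h
    apply hQ
    unfold hyperPMF
    rw [Nat.choose_eq_zero_of_lt (by omega)]
    simp
  have hy : x - a + b ∈ range (n+1) := by
    simp only [Finset.mem_range]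
    omega
  have hcond : ∀ y : ℕ, ((x:ℤ) - a + b = y) ↔ y = x - a + b := by intro y; omega
  calc ∑ y ∈ range (n+1),
        (if (x:ℤ)-a+b = y then hyperPMF n x k a * hyperPMF n (n-x) k b * g y else 0)
      = ∑ y ∈ range (n+1),
        (if y = x - a + b then hyperPMF n x k a * hyperPMF n (n-x) k b * g y else 0) := by
        refine Finset.sum_congr rfl fun y _ => ?_
        simp only [eq_iff_iff.mpr (hcond y)]
    _ = hyperPMF n x k a * hyperPMF n (n-x) k b * g (x - a + b) := by
        rw [Finset.sum_ite_eq' (range (n+1)) (x-a+b)]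
        simp [hy]

set_option maxHeartbeats 2000000 in
lemma step_f2 (n k x : ℕ) (hn : 2 ≤ n) (hk : k ≤ n) (hx : x ≤ n) :
    blStep n k (fun y => f2 n y) x = f2 n k * f2 n x := by
  have h2n : (2:ℝ) ≤ (n:ℝ) := by exact_mod_cast hn
  have hN : (n:ℝ) ≠ 0 := by positivity
  have hN1 : (n:ℝ) - 1 ≠ 0 := ne_of_gt (by linarith)
  have hD : ((n.choose k : ℕ):ℝ) ≠ 0 := by
    have := Nat.choose_pos hk
    positivity
  rw [blStep_eq n k x hx]
  have hxx : n - (n - x) = x := by omega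
  simp only [hyperPMF, hxx]
  have hA0 : (∑ a ∈ range (k+1), ((x.choose a * (n - x).choose (k - a) : ℕ) : ℝ)) = ((n.choose k : ℕ) : ℝ) := rmom0 n k x hx
  have hB0 : (∑ b ∈ range (k+1), (((n - x).choose b * x.choose (k - b) : ℕ) : ℝ)) = ((n.choose k : ℕ) : ℝ) := by
    have h := rmom0 n k (n-x) (by omega)
    rwa [hxx] at h
  have hA1' : (∑ a ∈ range (k+1), (a : ℝ) * ((x.choose a * (n - x).choose (k - a) : ℕ) : ℝ)) = ((k:ℝ) * (x:ℝ) * ((n.choose k : ℕ) : ℝ) / (n:ℝ)) := by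
    rw [eq_div_iff hN]
    linear_combination rmom1 n k x hx (by omega)
  have hB1' : (∑ b ∈ range (k+1), (b : ℝ) * (((n - x).choose b * x.choose (k - b) : ℕ) : ℝ)) = ((k:ℝ) * ((n:ℝ) - (x:ℝ)) * ((n.choose k : ℕ) : ℝ) / (n:ℝ)) := by
    rw [eq_div_iff hN]
    have h := rmom1 n k (n-x) (by omega) (by omega)
    rw [hxx, Nat.cast_sub hx] at h
    linear_combination h
  have hA2' : (∑ a ∈ range (k+1), (a : ℝ) * ((a : ℝ) - 1) * ((x.choose a * (n - x).choose (k - a) : ℕ) : ℝ)) = ((k:ℝ) * ((k:ℝ)-1) * ((x:ℝ) * ((x:ℝ)-1)) * ((n.choose k : ℕ) : ℝ) / ((n:ℝ) * ((n:ℝ)-1))) := by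
    rw [eq_div_iff (mul_ne_zero hN hN1)]
    linear_combination rmom2 n k x hx hn
  have hB2' : (∑ b ∈ range (k+1), (b : ℝ) * ((b : ℝ) - 1) * (((n - x).choose b * x.choose (k - b) : ℕ) : ℝ)) = ((k:ℝ) * ((k:ℝ)-1) * (((n:ℝ)-(x:ℝ)) * ((n:ℝ)-(x:ℝ)-1)) * ((n.choose k : ℕ) : ℝ) / ((n:ℝ) * ((n:ℝ)-1))) := by
    rw [eq_div_iff (mul_ne_zero hN hN1)]
    have h := rmom2 n k (n-x) (by omega) hn
    rw [hxx, Nat.cast_sub hx] at h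
    linear_combination h
  set C1 : ℝ := f2 n (x:ℝ) with hC1
  set C2 : ℝ := 2*(2*(n:ℝ)-1)/(n:ℝ)^2 + 4*(2*(n:ℝ)-1)*(1-(x:ℝ))/((n:ℝ)^2*((n:ℝ)-1)) with hC2
  set C3 : ℝ := -(2*(2*(n:ℝ)-1))/(n:ℝ)^2 + 4*(2*(n:ℝ)-1)*(x:ℝ)/((n:ℝ)^2*((n:ℝ)-1)) with hC3
  set C4 : ℝ := 2*(2*(n:ℝ)-1)/((n:ℝ)^2*((n:ℝ)-1)) with hC4
  set C6 : ℝ := -(4*(2*(n:ℝ)-1))/((n:ℝ)^2*((n:ℝ)-1)) with hC6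
  have key : ∀ a b : ℕ,
      ((x.choose a * (n - x).choose (k - a) : ℕ) : ℝ) / ((n.choose k : ℕ) : ℝ) * ((((n - x).choose b * x.choose (k - b) : ℕ) : ℝ) / ((n.choose k : ℕ) : ℝ)) * f2 n ((x - a + b : ℕ) : ℝ)
        = (1/(((n.choose k : ℕ) : ℝ) * ((n.choose k : ℕ) : ℝ))) * ((C1 * ((x.choose a * (n - x).choose (k - a) : ℕ) : ℝ) + C2 * ((a : ℝ) * ((x.choose a * (n - x).choose (k - a) : ℕ) : ℝ)) + C4 * ((a : ℝ) * ((a : ℝ) - 1) * ((x.choose a * (n - x).choose (k - a) : ℕ) : ℝ))) * (((n - x).choose b * x.choose (k - b) : ℕ) : ℝ)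
            + (C3 * ((x.choose a * (n - x).choose (k - a) : ℕ) : ℝ) + C6 * ((a : ℝ) * ((x.choose a * (n - x).choose (k - a) : ℕ) : ℝ)) + 0 * ((a : ℝ) * ((a : ℝ) - 1) * ((x.choose a * (n - x).choose (k - a) : ℕ) : ℝ))) * ((b : ℝ) * (((n - x).choose b * x.choose (k - b) : ℕ) : ℝ))
            + (C4 * ((x.choose a * (n - x).choose (k - a) : ℕ) : ℝ) + 0 * ((a : ℝ) * ((x.choose a * (n - x).choose (k - a) : ℕ) : ℝ)) + 0 * ((a : ℝ) * ((a : ℝ) - 1) * ((x.choose a * (n - x).choose (k - a) : ℕ) : ℝ))) * ((b : ℝ) * ((b : ℝ) - 1) * (((n - x).choose b * x.choose (k - b) : ℕ) : ℝ))) := by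
    intro a b
    by_cases ha : a ≤ x
    · have hc : ((x - a + b : ℕ) : ℝ) = (x:ℝ) - (a:ℝ) + (b:ℝ) := by
        rw [Nat.cast_add, Nat.cast_sub ha]
      rw [hc, hC1, hC2, hC3, hC4, hC6]
      unfold f2
      field_simp
      ring
    · have h0 : x.choose a = 0 := Nat.choose_eq_zero_of_lt (by omega)
      simp only [h0, zero_mul, Nat.cast_zero]
      ring
  calc ∑ a ∈ range (k+1), ∑ b ∈ range (k+1),
        ((x.choose a * (n - x).choose (k - a) : ℕ) : ℝ) / ((n.choose k : ℕ) : ℝ) * ((((n - x).choose b * x.choose (k - b) : ℕ) : ℝ) / ((n.choose k : ℕ) : ℝ)) * f2 n ((x - a + b : ℕ) : ℝ)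
      = ∑ a ∈ range (k+1), ∑ b ∈ range (k+1),
          (1/(((n.choose k : ℕ) : ℝ) * ((n.choose k : ℕ) : ℝ))) * ((C1 * ((x.choose a * (n - x).choose (k - a) : ℕ) : ℝ) + C2 * ((a : ℝ) * ((x.choose a * (n - x).choose (k - a) : ℕ) : ℝ)) + C4 * ((a : ℝ) * ((a : ℝ) - 1) * ((x.choose a * (n - x).choose (k - a) : ℕ) : ℝ))) * (((n - x).choose b * x.choose (k - b) : ℕ) : ℝ)
            + (C3 * ((x.choose a * (n - x).choose (k - a) : ℕ) : ℝ) + C6 * ((a : ℝ) * ((x.choose a * (n - x).choose (k - a) : ℕ) : ℝ)) + 0 * ((a : ℝ) * ((a : ℝ) - 1) * ((x.choose a * (n - x).choose (k - a) : ℕ) : ℝ))) * ((b : ℝ) * (((n - x).choose b * x.choose (k - b) : ℕ) : ℝ))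
            + (C4 * ((x.choose a * (n - x).choose (k - a) : ℕ) : ℝ) + 0 * ((a : ℝ) * ((x.choose a * (n - x).choose (k - a) : ℕ) : ℝ)) + 0 * ((a : ℝ) * ((a : ℝ) - 1) * ((x.choose a * (n - x).choose (k - a) : ℕ) : ℝ))) * ((b : ℝ) * ((b : ℝ) - 1) * (((n - x).choose b * x.choose (k - b) : ℕ) : ℝ))) :=
        Finset.sum_congr rfl fun a _ => Finset.sum_congr rfl fun b _ => key a b
    _ = ∑ a ∈ range (k+1), (1/(((n.choose k : ℕ) : ℝ) * ((n.choose k : ℕ) : ℝ))) * ((C1 * ((x.choose a * (n - x).choose (k - a) : ℕ) : ℝ) + C2 * ((a : ℝ) * ((x.choose a * (n - x).choose (k - a) : ℕ) : ℝ)) + C4 * ((a : ℝ) * ((a : ℝ) - 1) * ((x.choose a * (n - x).choose (k - a) : ℕ) : ℝ))) * (∑ b ∈ range (k+1), (((n - x).choose b * x.choose (k - b) : ℕ) : ℝ)) + (C3 * ((x.choose a * (n - x).choose (k - a) : ℕ) : ℝ) + C6 * ((a : ℝ) * ((x.choose a * (n - x).choose (k - a) : ℕ) : ℝ)) + 0 *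 ((a : ℝ) * ((a : ℝ) - 1) * ((x.choose a * (n - x).choose (k - a) : ℕ) : ℝ))) * (∑ b ∈ range (k+1), (b : ℝ) * (((n - x).choose b * x.choose (k - b) : ℕ) : ℝ)) + (C4 * ((x.choose a * (n - x).choose (k - a) : ℕ) : ℝ) + 0 * ((a : ℝ) * ((x.choose a * (n - x).choose (k - a) : ℕ) : ℝ)) + 0 * ((a : ℝ) * ((a : ℝ) - 1) * ((x.choose a * (n - x).choose (k - a) : ℕ) : ℝ))) * (∑ b ∈ range (k+1), (b : ℝ) * ((b : ℝ) - 1) * (((n - x).choose b * x.choose (k - b) : ℕ) : ℝ))) := by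
        refine Finset.sum_congr rfl fun a _ => ?_
        rw [← Finset.mul_sum, helper]
    _ = (1/(((n.choose k : ℕ) : ℝ) * ((n.choose k : ℕ) : ℝ))) * ((∑ a ∈ range (k+1), (C1 * ((x.choose a * (n - x).choose (k - a) : ℕ) : ℝ) + C2 * ((a : ℝ) * ((x.choose a * (n - x).choose (k - a) : ℕ) : ℝ)) + C4 * ((a : ℝ) * ((a : ℝ) - 1) * ((x.choose a * (n - x).choose (k - a) : ℕ) : ℝ)))) * (∑ b ∈ range (k+1), (((n - x).choose b * x.choose (k - b) : ℕ) : ℝ))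
          + (∑ a ∈ range (k+1), (C3 * ((x.choose a * (n - x).choose (k - a) : ℕ) : ℝ) + C6 * ((a : ℝ) * ((x.choose a * (n - x).choose (k - a) : ℕ) : ℝ)) + 0 * ((a : ℝ) * ((a : ℝ) - 1) * ((x.choose a * (n - x).choose (k - a) : ℕ) : ℝ)))) * (∑ b ∈ range (k+1), (b : ℝ) * (((n - x).choose b * x.choose (k - b) : ℕ) : ℝ))
          + (∑ a ∈ range (k+1), (C4 * ((x.choose a * (n - x).choose (k - a) : ℕ) : ℝ) + 0 * ((a : ℝ) * ((x.choose a * (n - x).choose (k - a) : ℕ) : ℝ)) + 0 * ((a : ℝ) * ((a : ℝ) - 1) * ((x.choose a * (n - x).choose (k - a) : ℕ) : ℝ)))) * (∑ b ∈ range (k+1), (b : ℝ) * ((b : ℝ) - 1) * (((n - x).choose b * x.choose (k - b) : ℕ) : ℝ))) := by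
        rw [← Finset.mul_sum, helper3]
    _ = (1/(((n.choose k : ℕ) : ℝ) * ((n.choose k : ℕ) : ℝ))) * ((C1 * (∑ a ∈ range (k+1), ((x.choose a * (n - x).choose (k - a) : ℕ) : ℝ)) + C2 * (∑ a ∈ range (k+1), (a : ℝ) * ((x.choose a * (n - x).choose (k - a) : ℕ) : ℝ)) + C4 * (∑ a ∈ range (k+1), (a : ℝ) * ((a : ℝ) - 1) * ((x.choose a * (n - x).choose (k - a) : ℕ) : ℝ))) * (∑ b ∈ range (k+1), (((n - x).choose b * x.choose (k - b) : ℕ) : ℝ))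
          + (C3 * (∑ a ∈ range (k+1), ((x.choose a * (n - x).choose (k - a) : ℕ) : ℝ)) + C6 * (∑ a ∈ range (k+1), (a : ℝ) * ((x.choose a * (n - x).choose (k - a) : ℕ) : ℝ)) + 0 * (∑ a ∈ range (k+1), (a : ℝ) * ((a : ℝ) - 1) * ((x.choose a * (n - x).choose (k - a) : ℕ) : ℝ))) * (∑ b ∈ range (k+1), (b : ℝ) * (((n - x).choose b * x.choose (k - b) : ℕ) : ℝ))
          + (C4 * (∑ a ∈ range (k+1), ((x.choose a * (n - x).choose (k - a) : ℕ) : ℝ)) + 0 * (∑ a ∈ range (k+1), (a : ℝ) * ((x.choose a * (n - x).choose (k - a) : ℕ) : ℝ)) + 0 * (∑ a ∈ range (k+1), (a : ℝ) * ((a : ℝ) - 1) * ((x.choose a * (n - x).choose (k - a) : ℕ) : ℝ))) * (∑ b ∈ range (k+1), (b : ℝ) * ((b : ℝ) - 1) * (((n - x).choose b * x.choose (k - b) : ℕ) : ℝ))) := by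
        rw [helper, helper, helper]
    _ = (1/(((n.choose k : ℕ) : ℝ) * ((n.choose k : ℕ) : ℝ))) * ((C1 * ((n.choose k : ℕ) : ℝ) + C2 * ((k:ℝ) * (x:ℝ) * ((n.choose k : ℕ) : ℝ) / (n:ℝ)) + C4 * ((k:ℝ) * ((k:ℝ)-1) * ((x:ℝ) * ((x:ℝ)-1)) * ((n.choose k : ℕ) : ℝ) / ((n:ℝ) * ((n:ℝ)-1)))) * ((n.choose k : ℕ) : ℝ)
          + (C3 * ((n.choose k : ℕ) : ℝ) + C6 * ((k:ℝ) * (x:ℝ) * ((n.choose k : ℕ) : ℝ) / (n:ℝ)) + 0 * ((k:ℝ) * ((k:ℝ)-1) * ((x:ℝ) * ((x:ℝ)-1)) * ((n.choose k : ℕ) : ℝ) / ((n:ℝ) * ((n:ℝ)-1)))) * ((k:ℝ) * ((n:ℝ) - (x:ℝ)) * ((n.choose k : ℕ) : ℝ) / (n:ℝ))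
          + (C4 * ((n.choose k : ℕ) : ℝ) + 0 * ((k:ℝ) * (x:ℝ) * ((n.choose k : ℕ) : ℝ) / (n:ℝ)) + 0 * ((k:ℝ) * ((k:ℝ)-1) * ((x:ℝ) * ((x:ℝ)-1)) * ((n.choose k : ℕ) : ℝ) / ((n:ℝ) * ((n:ℝ)-1)))) * ((k:ℝ) * ((k:ℝ)-1) * (((n:ℝ)-(x:ℝ)) * ((n:ℝ)-(x:ℝ)-1)) * ((n.choose k : ℕ) : ℝ) / ((n:ℝ) * ((n:ℝ)-1)))) := by
        rw [hA0, hA1', hA2', hB0, hB1', hB2']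
    _ = f2 n (k:ℝ) * C1 := by
        rw [hC1, hC2, hC3, hC4, hC6]
        unfold f2
        field_simp
        ring


lemma step_one (n k x : ℕ) (hk : k ≤ n) (hx : x ≤ n) :
    blStep n k (fun _ => (1:ℝ)) x = 1 := by
  have hD : ((n.choose k : ℕ):ℝ) ≠ 0 := by
    have := Nat.choose_pos hk
    positivity
  rw [blStep_eq n k x hx]
  have hxx : n - (n - x) = x := by omega
  simp only [hyperPMF, hxx, mul_one]
  rw [← Finset.sum_mul_sum]
  rw [← Finset.sum_div, ← Finset.sum_div, rmom0 n k x hx]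
  have h := rmom0 n k (n-x) (by omega)
  rw [hxx] at h
  rw [h]
  field_simp

/-- `E_{X₀}[f₁(X_t)²] = 1/(2n-1) + (2n-2)/(2n-1) · f₂(k)^t · f₂(X₀)`. -/
theorem expectation_f1_sq (n k t x : ℕ) (hn : 2 ≤ n) (hk : k ≤ n) (hx : x ≤ n) :
    (blStep n k)^[t] (fun y : ℕ => (f1 n y) ^ 2) x
      = 1 / (2 * (n : ℝ) - 1) + (2 * (n : ℝ) - 2) / (2 * (n : ℝ) - 1) * (f2 n k) ^ t * f2 n x := by
  have h2n : (2:ℝ) ≤ (n:ℝ) := by exact_mod_cast hn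
  have hN : (n:ℝ) ≠ 0 := by positivity
  have hN1 : (n:ℝ) - 1 ≠ 0 := ne_of_gt (by linarith)
  have h2N1 : 2 * (n:ℝ) - 1 ≠ 0 := ne_of_gt (by linarith)
  induction t generalizing x with
  | zero =>
    simp only [Function.iterate_zero, id, pow_zero]
    unfold f1 f2
    field_simp
    ring
  | succ t ih =>
    rw [Function.iterate_succ_apply']
    have hstep : blStep n k ((blStep n k)^[t] fun y : ℕ => (f1 n y) ^ 2) x
        = blStep n k (fun y : ℕ => 1 / (2 * (n : ℝ) - 1)
            + (2 * (n : ℝ) - 2) / (2 * (n : ℝ) - 1) * (f2 n k) ^ t * f2 n y) x := by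
      have hb : ∀ (g : ℕ → ℝ), blStep n k g x = ∑ y ∈ Finset.range (n+1), blTrans n k x y * g y :=
        fun g => rfl
      simp only [hb]
      refine Finset.sum_congr rfl fun y hy => ?_
      rw [ih y (by simp only [Finset.mem_range] at hy; omega)]
    rw [hstep]
    have lin : blStep n k (fun y : ℕ => 1 / (2 * (n : ℝ) - 1)
            + (2 * (n : ℝ) - 2) / (2 * (n : ℝ) - 1) * (f2 n k) ^ t * f2 n y) x
        = (1 / (2 * (n : ℝ) - 1)) * blStep n k (fun _ => (1:ℝ)) x
          + ((2 * (n : ℝ) - 2) / (2 * (n : ℝ) - 1) * (f2 n k) ^ t)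
            * blStep n k (fun y : ℕ => f2 n y) x := by
      have hb : ∀ (g : ℕ → ℝ), blStep n k g x = ∑ y ∈ Finset.range (n+1), blTrans n k x y * g y :=
        fun g => rfl
      simp only [hb]
      rw [Finset.mul_sum, Finset.mul_sum, ← Finset.sum_add_distrib]
      exact Finset.sum_congr rfl fun y _ => by ring
    rw [lin, step_one n k x hk hx, step_f2 n k x hn hk hx]
    ring
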